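/- Let G be a connected interval graph with an interval model, r ≥ 1, and A a k-element set of vertices. Then the number of distinct r-profiles with respect to A is at most (k·(2r+4)+1)·(2k+1) + k, i.e., pc_r(G,A) ≤ 4k^2r + 8k^2 + 2kr + 7k + 1; in particular pc_r(G,k) ∈ O(k^2 r). -/

import Mathlib

open SimpleGraph

noncomputable def rProfile {V : Type*} (G : SimpleGraph V) (r : ℕ) (A : Set V) (v : V) :
    A → ℕ∞ :=
  fun a => if G.edist v a ≤ r then G.edist v a else ⊤

noncomputable def profCount {V : Type*} (G : SimpleGraph V) (r : ℕ) (A : Set V) : ℕ :=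
  ({p | ∃ v : V, p = rProfile G r A v} \ {fun _ => ⊤}).ncard

/-!
Let `v ∉ A`. A member of `A` whose interval lies left of `v`'s is at distance at least `2` from
`v`, and this distance is monotone in `lo v`: a shortest path from it to a vertex further right
must cross the point `lo v`. Symmetrically on the right, with `hi v`, and members whose intervals
meet `v`'s are at distance `1`. Hence the left parts of the profiles form a chain in a product of
`k` sets of `r + 1` values, so there are at most `k r + 1` of them, and likewise for the right
parts. A path from a left member `a₀` to a right member `a` passes next to `v`, so
`d(a₀, v) + d(v, a) ≤ d(a₀, a) + 2`. So once the left part contains a finite distance, each right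
distance takes one of three values and the right parts over a fixed left part form a chain of at
most `3k + 1` elements; if it contains none, there are at most `k + 1` left parts. With the `k`
profiles of members of `A` this gives `k + (kr + 1)(3k + 1) + (k + 1)(kr + 1)` profiles.
-/

open Finset

structure IsIntervalModel {V : Type*} (G : SimpleGraph V) (lo hi : V → ℝ) : Prop where
  lo_le_hi : ∀ v, lo v ≤ hi v
  adj_iff : ∀ u v, G.Adj u v ↔ u ≠ v ∧ lo u ≤ hi v ∧ lo v ≤ hi u

section ChainCount

theorem card_le_of_isChain {ι β : Type*} [Fintype ι] [PartialOrder β] {T : Finset (ι → β)}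
    (hT : IsChain (· ≤ ·) (T : Set (ι → β))) {W : ι → Finset β} {c : ℕ}
    (hW : ∀ g ∈ T, ∀ i, g i ∈ W i) (hc : ∀ i, (W i).card ≤ c + 1) :
    T.card ≤ Fintype.card ι * c + 1 := by
  classical
  let rank : (ι → β) → ℕ := fun g => ∑ i, ((W i).filter (· < g i)).card
  have rank_lt : ∀ g ∈ T, rank g < Fintype.card ι * c + 1 := by
    intro g hg
    have : ∀ i, ((W i).filter (· < g i)).card ≤ c := fun i => by
      have hsub : (W i).filter (· < g i) ⊂ W i :=
        (ssubset_iff_of_subset (filter_subset _ _)).2 ⟨g i, hW g hg i, by simp⟩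
      have := card_lt_card hsub
      have := hc i
      omega
    calc rank g ≤ ∑ _i : ι, c := sum_le_sum fun i _ => this i
      _ < Fintype.card ι * c + 1 := by simp
  have rank_strictMono : ∀ g ∈ T, ∀ h, g < h → rank g < rank h := by
    intro g hg h hgh
    obtain ⟨hle, i, hi⟩ := Pi.lt_def.1 hgh
    have hsub : ∀ j, (W j).filter (· < g j) ⊆ (W j).filter (· < h j) := fun j t ht => by
      simp only [mem_filter] at ht ⊢
      exact ⟨ht.1, ht.2.trans_le (hle j)⟩
    refine sum_lt_sum (fun j _ => card_le_card (hsub j)) ⟨i, mem_univ _, card_lt_card ?_⟩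
    exact (ssubset_iff_of_subset (hsub i)).2 ⟨g i, by simp [hi, hW g hg i], by simp⟩
  have rank_injOn : Set.InjOn rank T := by
    intro g hg h hh hgh
    by_contra hne
    rcases (hT.total hg hh).imp (lt_of_le_of_ne · hne) (lt_of_le_of_ne · (Ne.symm hne)) with
      hlt | hlt
    · exact (rank_strictMono g hg h hlt).ne hgh
    · exact (rank_strictMono h hh g hlt).ne hgh.symm
  calc T.card ≤ (range (Fintype.card ι * c + 1)).card :=
        card_le_card_of_injOn rank (fun g hg => mem_range.2 (rank_lt g hg)) rank_injOn
    _ = Fintype.card ι * c + 1 := card_range _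

theorem card_image_prodMk_le {α β γ : Type*} [DecidableEq β] [DecidableEq γ] (S : Finset α)
    (f : α → β) (g : α → γ) {m : ℕ} (hm : ∀ b, ((S.filter (f · = b)).image g).card ≤ m) :
    (S.image fun x => (f x, g x)).card ≤ (S.image f).card * m := by
  have : (S.image fun x => (f x, g x)).image Prod.fst = S.image f := by
    rw [image_image]; rfl
  rw [mul_comm, ← this]
  refine card_le_mul_card_image _ m fun b _ => (card_le_card_of_injOn Prod.snd ?_ ?_).trans (hm b)
  · intro q hq
    simp only [coe_filter, mem_image, Set.mem_ofPred_eq] at hq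
    obtain ⟨⟨x, hx, rfl⟩, rfl⟩ := hq
    exact mem_image.2 ⟨x, mem_filter.2 ⟨hx, rfl⟩, rfl⟩
  · intro q hq q' hq' h
    simp only [coe_filter, Set.mem_ofPred_eq] at hq hq'
    exact Prod.ext (hq.2.trans hq'.2.symm) h

end ChainCount

section Truncation

def truncAt (r : ℕ) (e : ℕ∞) : ℕ∞ := if e ≤ r then e else ⊤

variable {r : ℕ} {e : ℕ∞}

theorem rProfile_apply {V : Type*} (G : SimpleGraph V) (r : ℕ) (A : Set V) (v : V) (a : A) :
    rProfile G r A v a = truncAt r (G.edist v a) := rfl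

theorem truncAt_mono (r : ℕ) : Monotone (truncAt r) := by
  intro e e' h
  unfold truncAt
  split_ifs with h₁ h₂ h₂
  · exact h
  · exact le_top
  · exact absurd (h.trans h₂) h₁
  · exact le_rfl

theorem truncAt_eq_zero : truncAt r e = 0 ↔ e = 0 := by
  unfold truncAt
  split_ifs with h
  · rfl
  · simp only [ENat.top_ne_zero, false_iff]
    rintro rfl
    exact h zero_le

theorem eq_of_truncAt_eq_coe {n : ℕ} (h : truncAt r e = n) : e = n := by
  unfold truncAt at h
  split_ifs at h
  · exact h
  · exact absurd h (ENat.top_ne_natCast n)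

theorem truncAt_one (hr : 1 ≤ r) : truncAt r 1 = 1 := if_pos (by exact_mod_cast hr)

def sideProfileValues (r : ℕ) : Finset ℕ∞ := insert 0 (insert ⊤ ((Icc 2 r).image (↑)))

theorem card_sideProfileValues_le (hr : 1 ≤ r) : (sideProfileValues r).card ≤ r + 1 := by
  calc (sideProfileValues r).card ≤ ((Icc 2 r).image ((↑) : ℕ → ℕ∞)).card + 1 + 1 :=
        (card_insert_le _ _).trans (Nat.add_le_add_right (card_insert_le _ _) 1)
    _ ≤ (r + 1 - 2) + 1 + 1 := by gcongr; exact card_image_le.trans (Nat.card_Icc 2 r).le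
    _ = r + 1 := by omega

theorem truncAt_mem_sideProfileValues (h : 2 ≤ e) : truncAt r e ∈ sideProfileValues r := by
  unfold truncAt sideProfileValues
  split_ifs with her
  · lift e to ℕ using ne_top_of_le_ne_top (ENat.natCast_ne_top r) her
    norm_cast at h her
    simp [h, her]
  · simp

end Truncation

section Profiles

variable {V : Type*}

/-- The right part of a profile is `leftProfile G (-hi) (-lo) r A`, the left part for the
mirrored interval model. -/
noncomputable def leftProfile (G : SimpleGraph V) (lo hi : V → ℝ) (r : ℕ) (A : Set V) (v : V) :
    A → ℕ∞ :=
  fun a => if hi a < lo v then rProfile G r A v a else 0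

/-- `1` is the profile value on the members whose intervals meet `v`'s. -/
def profileOfSides {ι : Type*} (x y : ι → ℕ∞) : ι → ℕ∞ :=
  fun i => if x i ≠ 0 then x i else if y i ≠ 0 then y i else 1

theorem profCount_empty (G : SimpleGraph V) (r : ℕ) : profCount G r ∅ = 0 := by
  rw [profCount, (Set.sdiff_eq_empty (t := {fun _ => ⊤})).2 fun p _ => Subsingleton.elim p _,
    Set.ncard_empty]

open Classical in
theorem profCount_le_card_image [Fintype V] (G : SimpleGraph V) (r : ℕ) (A : Set V) :
    profCount G r A ≤ (univ.image (rProfile G r A)).card := by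
  rw [profCount, ← Set.ncard_coe_finset, coe_image, coe_univ, Set.image_univ]
  refine Set.ncard_le_ncard (fun p hp => ?_) (Set.toFinite _)
  obtain ⟨v, rfl⟩ := hp.1
  exact ⟨v, rfl⟩

end Profiles

namespace IsIntervalModel

variable {V : Type*} {G : SimpleGraph V} {lo hi : V → ℝ} {r : ℕ} {A : Set V}

theorem neg (hM : IsIntervalModel G lo hi) : IsIntervalModel G (-hi) (-lo) where
  lo_le_hi v := neg_le_neg (hM.lo_le_hi v)
  adj_iff u v := by
    simp only [Pi.neg_apply, neg_le_neg_iff, hM.adj_iff u v]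
    tauto

theorem ne_of_hi_lt_lo (hM : IsIntervalModel G lo hi) {u v : V} (h : hi u < lo v) : u ≠ v := by
  rintro rfl
  exact (hM.lo_le_hi u).not_gt h

theorem edist_le_one (hM : IsIntervalModel G lo hi) {u v : V} (h₁ : lo u ≤ hi v)
    (h₂ : lo v ≤ hi u) : G.edist u v ≤ 1 := by
  by_cases huv : u = v
  · simp [huv]
  · exact (edist_eq_one_iff_adj.2 ((hM.adj_iff u v).2 ⟨huv, h₁, h₂⟩)).le

theorem two_le_edist (hM : IsIntervalModel G lo hi) {u v : V} (h : hi u < lo v) :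
    2 ≤ G.edist u v := by
  have h₀ : G.edist u v ≠ 0 := edist_eq_zero_iff.not.2 (hM.ne_of_hi_lt_lo h)
  have h₁ : G.edist u v ≠ 1 := fun h₁ =>
    h.not_ge ((hM.adj_iff u v).1 (edist_eq_one_iff_adj.1 h₁)).2.2
  generalize G.edist u v = e at h₀ h₁
  induction e using ENat.recTopCoe with
  | top => exact le_top
  | coe n => norm_cast at h₀ h₁ ⊢; omega

/-- A walk from `a` to `w` that starts left of `v` must pass through a neighbour of `v` before
its last step. -/
theorem edist_le_length (hM : IsIntervalModel G lo hi) {v w : V} (hvw : lo v ≤ lo w) {a : V}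
    (p : G.Walk a w) (hav : hi a < lo v) : G.edist a v ≤ p.length := by
  induction p with
  | nil => exact absurd ((hM.lo_le_hi _).trans_lt hav) hvw.not_gt
  | @cons a b w hab q ih =>
    by_cases hbv : hi b < lo v
    · calc G.edist a v ≤ G.edist a b + G.edist b v := SimpleGraph.edist_triangle
        _ ≤ 1 + q.length := add_le_add (edist_eq_one_iff_adj.2 hab).le (ih hvw hbv)
        _ = (q.cons hab).length := by simp [add_comm]
    · obtain ⟨-, -, hba⟩ := (hM.adj_iff a b).1 hab
      have hq : q.length ≠ 0 := fun h => by
        obtain rfl := q.eq_of_length_eq_zero h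
        exact (hba.trans_lt hav).not_ge hvw
      calc G.edist a v ≤ G.edist a b + G.edist b v := SimpleGraph.edist_triangle
        _ ≤ 1 + 1 := add_le_add (edist_eq_one_iff_adj.2 hab).le
            (hM.edist_le_one ((hba.trans_lt hav).le.trans (hM.lo_le_hi v)) (not_lt.1 hbv))
        _ ≤ (q.cons hab).length := by simp; omega

theorem edist_add_edist_le_length (hM : IsIntervalModel G lo hi) {v a a' : V}
    (p : G.Walk a a') (hav : hi a < lo v) (hva' : hi v < lo a') :
    G.edist a v + G.edist v a' ≤ p.length + 2 := by
  induction p with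
  | nil => exact absurd (((hM.lo_le_hi v).trans_lt hva').trans_le (hM.lo_le_hi _)) hav.not_gt
  | @cons a b a' hab q ih =>
    have hab₁ : G.edist a b ≤ 1 := (edist_eq_one_iff_adj.2 hab).le
    by_cases hbv : hi b < lo v
    · calc G.edist a v + G.edist v a' ≤ G.edist a b + (G.edist b v + G.edist v a') := by
            rw [← add_assoc]; exact add_le_add_left SimpleGraph.edist_triangle _
        _ ≤ 1 + (q.length + 2) := add_le_add hab₁ (ih hbv hva')
        _ = (q.cons hab).length + 2 := by simp; ring
    · obtain ⟨-, -, hba⟩ := (hM.adj_iff a b).1 hab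
      have hbv₁ : G.edist b v ≤ 1 :=
        hM.edist_le_one ((hba.trans_lt hav).le.trans (hM.lo_le_hi v)) (not_lt.1 hbv)
      calc G.edist a v + G.edist v a'
          ≤ (G.edist a b + G.edist b v) + (G.edist v b + G.edist b a') :=
            add_le_add SimpleGraph.edist_triangle SimpleGraph.edist_triangle
        _ ≤ (1 + 1) + (1 + q.length) := by
            rw [edist_comm (u := v)]
            exact add_le_add (add_le_add hab₁ hbv₁) (add_le_add hbv₁ q.edist_le)
        _ = (q.cons hab).length + 2 := by simp; ring

theorem edist_le_edist (hM : IsIntervalModel G lo hi) {a v w : V} (hav : hi a < lo v)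
    (hvw : lo v ≤ lo w) : G.edist a v ≤ G.edist a w := by
  obtain h | h := eq_or_ne (G.edist a w) ⊤
  · simp [h]
  · obtain ⟨p, hp⟩ := exists_walk_of_edist_ne_top h
    exact hp ▸ hM.edist_le_length hvw p hav

theorem edist_add_edist_le (hM : IsIntervalModel G lo hi) {a v a' : V} (hav : hi a < lo v)
    (hva' : hi v < lo a') : G.edist a v + G.edist v a' ≤ G.edist a a' + 2 := by
  obtain h | h := eq_or_ne (G.edist a a') ⊤
  · simp [h]
  · obtain ⟨p, hp⟩ := exists_walk_of_edist_ne_top h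
    exact hp ▸ hM.edist_add_edist_le_length p hav hva'

theorem leftProfile_ne_zero_iff (hM : IsIntervalModel G lo hi) {v : V} {a : A} :
    leftProfile G lo hi r A v a ≠ 0 ↔ hi a < lo v := by
  unfold leftProfile
  split_ifs with h
  · simpa [h, rProfile_apply, truncAt_eq_zero] using (hM.ne_of_hi_lt_lo h).symm
  · simpa using h

theorem rightProfile_ne_zero_iff (hM : IsIntervalModel G lo hi) {v : V} {a : A} :
    leftProfile G (-hi) (-lo) r A v a ≠ 0 ↔ hi v < lo a := by
  rw [hM.neg.leftProfile_ne_zero_iff, Pi.neg_apply, Pi.neg_apply, neg_lt_neg_iff]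

theorem leftProfile_mono (hM : IsIntervalModel G lo hi) {v w : V} (hvw : lo v ≤ lo w) :
    leftProfile G lo hi r A v ≤ leftProfile G lo hi r A w := by
  intro a
  unfold leftProfile
  split_ifs with hv hw
  · simp only [rProfile_apply, edist_comm (v := (a : V))]
    exact truncAt_mono r (hM.edist_le_edist hv hvw)
  · exact absurd (hv.trans_le hvw) hw
  all_goals exact zero_le

theorem leftProfile_mem_sideProfileValues (hM : IsIntervalModel G lo hi) (v : V) (a : A) :
    leftProfile G lo hi r A v a ∈ sideProfileValues r := by
  unfold leftProfile
  split_ifs with h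
  · rw [rProfile_apply, edist_comm]
    exact truncAt_mem_sideProfileValues (hM.two_le_edist h)
  · exact mem_insert_self _ _

theorem rProfile_eq_profileOfSides (hM : IsIntervalModel G lo hi) (hr : 1 ≤ r) {v : V}
    (hv : v ∉ A) :
    rProfile G r A v = profileOfSides (leftProfile G lo hi r A v)
      (leftProfile G (-hi) (-lo) r A v) := by
  funext a
  unfold profileOfSides
  split_ifs with hL hR
  · exact (if_pos (hM.leftProfile_ne_zero_iff.1 hL)).symm
  · exact (if_pos (hM.neg.leftProfile_ne_zero_iff.1 hR)).symm
  · rw [hM.leftProfile_ne_zero_iff.not, not_lt] at hL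
    rw [hM.rightProfile_ne_zero_iff.not, not_lt] at hR
    have hva : v ≠ a := fun h => hv (h ▸ a.2)
    rw [rProfile_apply, edist_eq_one_iff_adj.2 ((hM.adj_iff v a).2 ⟨hva, hL, hR⟩), truncAt_one hr]

theorem rightProfile_mem_of_leftProfile_eq (hM : IsIntervalModel G lo hi) (hG : G.Connected)
    {v : V} {a₀ : A} {δ : ℕ} (hδ : leftProfile G lo hi r A v a₀ = δ) (hδ₀ : δ ≠ 0) (a : A) :
    leftProfile G (-hi) (-lo) r A v a ∈
      insert 0 ((Icc (G.dist a₀ a - δ) (G.dist a₀ a - δ + 2)).image fun n : ℕ => truncAt r n) := by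
  have hleft : hi a₀ < lo v := hM.leftProfile_ne_zero_iff.1 (by rw [hδ]; exact_mod_cast hδ₀)
  rw [leftProfile, if_pos hleft, rProfile_apply] at hδ
  have hvδ : G.edist a₀ v = δ := by rw [edist_comm]; exact eq_of_truncAt_eq_coe hδ
  by_cases hR : leftProfile G (-hi) (-lo) r A v a = 0
  · rw [hR]; exact mem_insert_self _ _
  have hright : hi v < lo a := hM.rightProfile_ne_zero_iff.1 hR
  have hrig := hM.edist_add_edist_le hleft hright
  have htri : G.edist a₀ a ≤ G.edist a₀ v + G.edist v a := SimpleGraph.edist_triangle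
  rw [hvδ, ← (hG v a).coe_dist_eq_edist, ← (hG a₀ a).coe_dist_eq_edist] at hrig htri
  norm_cast at hrig htri
  rw [leftProfile, if_pos (by simpa using hright), rProfile_apply, ← (hG v a).coe_dist_eq_edist]
  exact mem_insert_of_mem (mem_image.2 ⟨_, mem_Icc.2 ⟨by omega, by omega⟩, rfl⟩)

variable [Fintype V]

open Classical in
theorem card_image_leftProfile_le (hM : IsIntervalModel G lo hi) (S : Finset V)
    {W : A → Finset ℕ∞} {c : ℕ} (hW : ∀ v ∈ S, ∀ a, leftProfile G lo hi r A v a ∈ W a)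
    (hc : ∀ a, (W a).card ≤ c + 1) :
    (S.image (leftProfile G lo hi r A)).card ≤ A.ncard * c + 1 := by
  rw [← Nat.card_coe_set_eq, Nat.card_eq_fintype_card]
  refine card_le_of_isChain ?_ (by simpa using hW) hc
  rintro _ hx _ hy -
  simp only [coe_image, Set.mem_image, mem_coe] at hx hy
  obtain ⟨v, -, rfl⟩ := hx
  obtain ⟨w, -, rfl⟩ := hy
  exact (le_total (lo v) (lo w)).imp hM.leftProfile_mono hM.leftProfile_mono

open Classical in
theorem card_image_rProfile_le_card_image_sides (hM : IsIntervalModel G lo hi) (hr : 1 ≤ r)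
    (S : Finset V) (hS : ∀ v ∈ S, v ∉ A) :
    (S.image (rProfile G r A)).card ≤
      (S.image fun v => (leftProfile G lo hi r A v, leftProfile G (-hi) (-lo) r A v)).card := by
  have : S.image (rProfile G r A) = (S.image fun v => (leftProfile G lo hi r A v,
      leftProfile G (-hi) (-lo) r A v)).image fun p => profileOfSides p.1 p.2 := by
    rw [image_image]
    exact image_congr fun v hv => hM.rProfile_eq_profileOfSides hr (hS v hv)
  rw [this]
  exact card_image_le

open Classical in
theorem card_image_rProfile_le_of_exists (hM : IsIntervalModel G lo hi) (hG : G.Connected)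
    (hr : 1 ≤ r) {S : Finset V}
    (hS : ∀ v ∈ S, v ∉ A ∧ ∃ a, leftProfile G lo hi r A v a ∉ ({0, ⊤} : Finset ℕ∞)) :
    (S.image (rProfile G r A)).card ≤ (A.ncard * r + 1) * (A.ncard * 3 + 1) := by
  refine (hM.card_image_rProfile_le_card_image_sides hr S fun v hv => (hS v hv).1).trans ?_
  refine (card_image_prodMk_le S _ _ fun b => ?_).trans (Nat.mul_le_mul_right _
    (hM.card_image_leftProfile_le S (fun v _ => hM.leftProfile_mem_sideProfileValues v)
      fun _ => card_sideProfileValues_le hr))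
  obtain hF | ⟨v₀, hv₀⟩ := (S.filter (leftProfile G lo hi r A · = b)).eq_empty_or_nonempty
  · simp [hF]
  obtain ⟨hv₀S, rfl⟩ := mem_filter.1 hv₀
  obtain ⟨a₀, ha₀⟩ := (hS v₀ hv₀S).2
  simp only [mem_insert, mem_singleton, not_or] at ha₀
  set δ := (leftProfile G lo hi r A v₀ a₀).toNat
  refine hM.neg.card_image_leftProfile_le _ (c := 3)
    (W := fun a => insert 0 ((Icc (G.dist a₀ a - δ) (G.dist a₀ a - δ + 2)).image
      fun n : ℕ => truncAt r n)) (fun v hv a => ?_) fun a => ?_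
  · exact hM.rightProfile_mem_of_leftProfile_eq hG
      ((congrFun (mem_filter.1 hv).2 a₀).trans (ENat.natCast_toNat ha₀.2).symm)
      (by simpa [δ, ENat.toNat_eq_zero] using ha₀) a
  · refine (card_insert_le _ _).trans (Nat.add_le_add_right (card_image_le.trans ?_) 1)
    simp only [Nat.card_Icc]
    omega

open Classical in
theorem card_image_rProfile_le_of_forall (hM : IsIntervalModel G lo hi) (hr : 1 ≤ r)
    {S : Finset V}
    (hS : ∀ v ∈ S, v ∉ A ∧ ∀ a, leftProfile G lo hi r A v a ∈ ({0, ⊤} : Finset ℕ∞)) :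
    (S.image (rProfile G r A)).card ≤ (A.ncard + 1) * (A.ncard * r + 1) := by
  refine (hM.card_image_rProfile_le_card_image_sides hr S fun v hv => (hS v hv).1).trans ?_
  refine (card_image_prodMk_le S _ _ fun b =>
    card_le_card (image_subset_image (filter_subset _ S))).trans (Nat.mul_le_mul ?_ ?_)
  · simpa using hM.card_image_leftProfile_le (c := 1) S (fun v hv => (hS v hv).2)
      fun _ => card_le_two
  · exact hM.neg.card_image_leftProfile_le S
      (fun v _ => hM.neg.leftProfile_mem_sideProfileValues v) fun _ => card_sideProfileValues_le hr

theorem profCount_le (hM : IsIntervalModel G lo hi) (hG : G.Connected) (hr : 1 ≤ r) :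
    profCount G r A ≤ A.ncard + (A.ncard * r + 1) * (A.ncard * 3 + 1) +
      (A.ncard + 1) * (A.ncard * r + 1) := by
  classical
  let flat : V → Prop := fun v => ∀ a, leftProfile G lo hi r A v a ∈ ({0, ⊤} : Finset ℕ∞)
  have hsplit : (univ : Finset V) =
      A.toFinset ∪ Aᶜ.toFinset.filter (¬ flat ·) ∪ Aᶜ.toFinset.filter flat := by
    ext v
    simp only [mem_univ, mem_union, Set.mem_toFinset, mem_filter, Set.mem_compl_iff, true_iff]
    tauto
  calc profCount G r A ≤ (univ.image (rProfile G r A)).card := profCount_le_card_image G r A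
    _ ≤ (A.toFinset.image (rProfile G r A)).card +
        ((Aᶜ.toFinset.filter (¬ flat ·)).image (rProfile G r A)).card +
        ((Aᶜ.toFinset.filter flat).image (rProfile G r A)).card := by
      rw [hsplit, image_union, image_union]
      exact (card_union_le _ _).trans (Nat.add_le_add_right (card_union_le _ _) _)
    _ ≤ _ := by
      gcongr
      · exact card_image_le.trans (Set.ncard_eq_toFinset_card' A).ge
      · exact hM.card_image_rProfile_le_of_exists hG hr fun v hv => by
          simp_all [flat]
      · exact hM.card_image_rProfile_le_of_forall hr fun v hv => by
          simp_all [flat]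

end IsIntervalModel

/-- for a connected interval graph `G` (given by an interval model
`v ↦ [lo v, hi v]`), `r ≥ 1` and any set `A` of `k` vertices, the number of distinct
`r`-profiles with respect to `A` is at most `4k²r + 8k² + 2kr + 7k + 1`. -/
theorem profCount_interval_graph {V : Type*} [Fintype V] (G : SimpleGraph V)
    (hG : G.Connected) (lo hi : V → ℝ) (hint : ∀ v, lo v ≤ hi v)
    (hadj : ∀ u v : V, G.Adj u v ↔ u ≠ v ∧ lo u ≤ hi v ∧ lo v ≤ hi u)
    (r k : ℕ) (hr : 1 ≤ r) (A : Set V) (hA : A.ncard = k) :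
    profCount G r A ≤ 4 * k ^ 2 * r + 8 * k ^ 2 + 2 * k * r + 7 * k + 1 := by
  obtain rfl | hk := Nat.eq_zero_or_pos k
  · rw [(Set.ncard_eq_zero A.toFinite).1 hA, profCount_empty]
    exact Nat.zero_le _
  · have := IsIntervalModel.profCount_le (A := A) ⟨hint, hadj⟩ hG hr
    rw [hA] at this
    nlinarith
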